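/- Let n ≥ 2 and K ≥ 3. For every vector (a,b) ∈ ℂ^{2n} with (a,b) ≠ 0, there exist upper unitriangular complex n×n matrices A₁,…,A_K and symmetric complex n×n matrices Z₁,…,Z_K such that the tuple ((A₁,Z₁),…,(A_K,Z_K)) does not lie in S_K and the last row of the alternating product Ψ_K = M⁻(A₁,Z₁)·M⁺(A₂,Z₂)·⋯ (whose k-th factor is M⁻(A_k,Z_k) for k odd and M⁺(A_k,Z_k) for k even) equals (a,b). In other words, the restriction of Φ_K to the complement of S_K is surjective onto ℂ^{2n}∖{0}. -/

import Mathlib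

/-!
Index from `0` and take every `A k = 1` and `Z k = 0` for `k ≥ 3`, so that
`Ψ_K = L(Z₀) U(Z₁) L(Z₂)` with
`L(Z) = [[1,0],[Z,1]]` and `U(Z) = [[1,Z],[0,1]]`. On row vectors `(x,y) L(Z) = (x + yZ, y)` and
`(x,y) U(Z) = (x, xZ + y)`, and for `c ≠ 0` every `d` is `cZ` for a symmetric `Z`. Hence `(0,eₙ)`
can be moved to `(z,eₙ)`, then `(z,b)`, then `(a,b)`, for any `z ≠ 0` (`z = b`, or `z = a` if
`b = 0`). Since `Z₀ eₙ = eₙ Z₀ = z ≠ 0`, the tuple is not in `S_K`.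
-/

open Matrix

/-- `M⁻(A,Z) = [[Iₙ,0],[Z,Iₙ]]·[[A⁻ᵀ,0],[0,A]]`. -/
noncomputable def MnegAZ {n : ℕ} (A Z : Matrix (Fin n) (Fin n) ℂ) :
    Matrix (Fin n ⊕ Fin n) (Fin n ⊕ Fin n) ℂ :=
  Matrix.fromBlocks 1 0 Z 1 * Matrix.fromBlocks (Aᵀ)⁻¹ 0 0 A

/-- `M⁺(A,Z) = [[Iₙ,Z],[0,Iₙ]]·[[A⁻¹,0],[0,Aᵀ]]`. -/
noncomputable def MposAZ {n : ℕ} (A Z : Matrix (Fin n) (Fin n) ℂ) :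
    Matrix (Fin n ⊕ Fin n) (Fin n ⊕ Fin n) ℂ :=
  Matrix.fromBlocks 1 Z 0 1 * Matrix.fromBlocks A⁻¹ 0 0 Aᵀ

/-- Upper triangular with all diagonal entries `1`. -/
def IsUpperUnitriangular {n : ℕ} (A : Matrix (Fin n) (Fin n) ℂ) : Prop :=
  (∀ i, A i i = 1) ∧ ∀ i j : Fin n, j < i → A i j = 0

/-- The `n`-th standard basis vector `eₙ` of `ℂⁿ`. -/
def en (n : ℕ) : Fin n → ℂ := fun i => if (i : ℕ) = n - 1 then 1 else 0

namespace Matrix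

variable {ι R : Type*}

theorem isSymm_vecMulVec_add_vecMulVec_sub [CommRing R] (v w : ι → R) (r : R) :
    (vecMulVec v w + vecMulVec w v - r • vecMulVec w w).IsSymm := by
  simp only [IsSymm, transpose_sub, transpose_add, transpose_smul, transpose_vecMulVec]
  abel

variable [Fintype ι]

-- Symmetrizing the rank-one solution `d ⊗ w` costs the correction term `(c ⬝ d) w ⊗ w`.
theorem vecMul_vecMulVec_add_vecMulVec_sub [CommRing R] {c w : ι → R} (hcw : c ⬝ᵥ w = 1)
    (d : ι → R) : c ᵥ* (vecMulVec d w + vecMulVec w d - (c ⬝ᵥ d) • vecMulVec w w) = d := by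
  simp only [vecMul_sub, vecMul_add, vecMul_smul, vecMul_vecMulVec, hcw, one_smul]
  abel

theorem exists_dotProduct_eq_one [Field R] [DecidableEq ι] {c : ι → R} (hc : c ≠ 0) :
    ∃ w, c ⬝ᵥ w = 1 := by
  obtain ⟨i, hi⟩ := Function.ne_iff.mp hc
  exact ⟨Pi.single i (c i)⁻¹, by simp [mul_inv_cancel₀ hi]⟩

theorem exists_isSymm_vecMul_eq [Field R] [DecidableEq ι] {c : ι → R} (hc : c ≠ 0) (d : ι → R) :
    ∃ Z : Matrix ι ι R, Z.IsSymm ∧ c ᵥ* Z = d := by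
  obtain ⟨w, hcw⟩ := exists_dotProduct_eq_one hc
  exact ⟨_, isSymm_vecMulVec_add_vecMulVec_sub d w _, vecMul_vecMulVec_add_vecMulVec_sub hcw d⟩

theorem IsSymm.mulVec_eq_vecMul [CommSemiring R] {Z : Matrix ι ι R} (hZ : Z.IsSymm) (v : ι → R) :
    Z *ᵥ v = v ᵥ* Z := by
  rw [← mulVec_transpose, hZ.eq]

variable [Semiring R] [DecidableEq ι]

theorem sumElim_vecMul_fromBlocks_one_zero (x y : ι → R) (Z : Matrix ι ι R) :
    Sum.elim x y ᵥ* fromBlocks 1 0 Z 1 = Sum.elim (x + y ᵥ* Z) y := by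
  simp [vecMul_fromBlocks]

theorem sumElim_vecMul_fromBlocks_one_one (x y : ι → R) (Z : Matrix ι ι R) :
    Sum.elim x y ᵥ* fromBlocks 1 Z 0 1 = Sum.elim x (x ᵥ* Z + y) := by
  simp [vecMul_fromBlocks]

end Matrix

theorem List.prod_ofFn_add_eq_of_eq_one {M : Type*} [Monoid M] {k m : ℕ} (f : Fin (k + m) → M)
    (hf : ∀ j, f (Fin.natAdd k j) = 1) :
    (List.ofFn f).prod = (List.ofFn fun i => f (Fin.castAdd m i)).prod := by
  simp only [List.ofFn_add, List.prod_append, hf, List.ofFn_const, List.prod_replicate, one_pow,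
    mul_one]
  rfl

theorem MnegAZ_one {n : ℕ} (Z : Matrix (Fin n) (Fin n) ℂ) : MnegAZ 1 Z = fromBlocks 1 0 Z 1 := by
  rw [MnegAZ, transpose_one, inv_one, fromBlocks_one, mul_one]

theorem MposAZ_one {n : ℕ} (Z : Matrix (Fin n) (Fin n) ℂ) : MposAZ 1 Z = fromBlocks 1 Z 0 1 := by
  rw [MposAZ, transpose_one, inv_one, fromBlocks_one, mul_one]

theorem isUpperUnitriangular_one {n : ℕ} : IsUpperUnitriangular (1 : Matrix (Fin n) (Fin n) ℂ) :=
  ⟨fun _ => one_apply_eq _, fun _ _ h => one_apply_ne h.ne'⟩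

theorem en_ne_zero {n : ℕ} (hn : 0 < n) : en n ≠ 0 :=
  Function.ne_iff.mpr ⟨⟨n - 1, by omega⟩, by simp [en]⟩

theorem prod_alternating_one_append {n m : ℕ} (Z₀ Z₁ Z₂ : Matrix (Fin n) (Fin n) ℂ) :
    (List.ofFn fun k : Fin (3 + m) =>
      if (k : ℕ) % 2 = 0 then MnegAZ 1 (Fin.append ![Z₀, Z₁, Z₂] 0 k)
      else MposAZ 1 (Fin.append ![Z₀, Z₁, Z₂] 0 k)).prod
      = fromBlocks 1 0 Z₀ 1 * fromBlocks 1 Z₁ 0 1 * fromBlocks 1 0 Z₂ 1 := by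
  rw [List.prod_ofFn_add_eq_of_eq_one]
  · simp [List.ofFn_succ, MnegAZ_one, MposAZ_one, mul_assoc]
  · intro j
    simp [MnegAZ_one, MposAZ_one]

theorem stmt5 (n K : ℕ) (hn : 2 ≤ n) (hK : 3 ≤ K)
    (ab : Fin n ⊕ Fin n → ℂ) (hab : ab ≠ 0) :
    ∃ A Z : Fin K → Matrix (Fin n) (Fin n) ℂ,
      (∀ k, IsUpperUnitriangular (A k)) ∧
      (∀ k, (Z k).IsSymm) ∧
      -- the tuple ((A₁,Z₁),…,(A_K,Z_K)) does not lie in S_K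
      ¬ ((∀ i : Fin K, (i : ℕ) + 1 < K → (Z i).mulVec (en n) = 0) ∧
         (∀ j : Fin K, 0 < (j : ℕ) → (j : ℕ) + 1 < K → (A j).mulVec (en n) = en n)) ∧
      -- the last row of the alternating product is (a, b)
      Matrix.vecMul (Sum.elim 0 (en n))
        (List.ofFn fun k : Fin K =>
          if (k : ℕ) % 2 = 0 then MnegAZ (A k) (Z k) else MposAZ (A k) (Z k)).prod = ab := by
  obtain ⟨m, rfl⟩ : ∃ m, K = 3 + m := ⟨K - 3, by omega⟩
  set a := ab ∘ Sum.inl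
  set b := ab ∘ Sum.inr
  have hab' : Sum.elim a b = ab := Sum.elim_comp_inl_inr ab
  obtain ⟨z, hz, Z₂, hZ₂, hbZ₂⟩ : ∃ z ≠ 0, ∃ Z₂ : Matrix (Fin n) (Fin n) ℂ,
      Z₂.IsSymm ∧ b ᵥ* Z₂ = a - z := by
    by_cases hb : b = 0
    · refine ⟨a, fun ha => hab ?_, 0, isSymm_zero, by simp [hb]⟩
      rw [← hab', ha, hb, Sum.elim_zero_zero]
    · exact ⟨b, hb, exists_isSymm_vecMul_eq hb (a - b)⟩
  obtain ⟨Z₀, hZ₀, heZ₀⟩ := exists_isSymm_vecMul_eq (en_ne_zero (by omega)) z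
  obtain ⟨Z₁, hZ₁, hzZ₁⟩ := exists_isSymm_vecMul_eq hz (b - en n)
  refine ⟨fun _ => 1, Fin.append ![Z₀, Z₁, Z₂] 0, fun _ => isUpperUnitriangular_one, ?_, ?_, ?_⟩
  · refine Fin.addCases (fun i => ?_) (fun _ => by simp [isSymm_zero])
    fin_cases i <;> simpa
  · rintro ⟨hS, -⟩
    exact hz (by simpa [hZ₀.mulVec_eq_vecMul, heZ₀] using hS (Fin.castAdd m 0) (by simp; omega))
  · rw [prod_alternating_one_append, ← vecMul_vecMul, ← vecMul_vecMul,
      sumElim_vecMul_fromBlocks_one_zero, heZ₀, zero_add, sumElim_vecMul_fromBlocks_one_one, hzZ₁,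
      sub_add_cancel, sumElim_vecMul_fromBlocks_one_zero, hbZ₂, add_sub_cancel, hab']
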